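/- If T ∈ B(H) is sub-n-normal, i.e., there exists a Hilbert space K ⊇ H and an operator S ∈ B(K) with Sⁿ normal, SH ⊆ H, and S|_H = T, then Tⁿ is hyponormal. -/

import Mathlib

open ContinuousLinearMap

def Hyponormal {H : Type*} [NormedAddCommGroup H] [InnerProductSpace ℂ H] [CompleteSpace H]
    (T : H →L[ℂ] H) : Prop :=
  (star T * T - T * star T).IsPositive

/-!
Since `V` is an isometry and `SⁿV = VTⁿ`, the operator `Tⁿ = V* Sⁿ V` is the compression of the
normal operator `Sⁿ`, so `‖(Tⁿ)* x‖ = ‖V* (Sⁿ)* V x‖ ≤ ‖(Sⁿ)* V x‖ = ‖Sⁿ V x‖ = ‖Tⁿ x‖`. This norm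
inequality for every `x` is exactly the positivity of `(Tⁿ)*Tⁿ - Tⁿ(Tⁿ)*`.
-/

theorem hyponormal_iff_norm_adjoint_apply_le {H : Type*} [NormedAddCommGroup H]
    [InnerProductSpace ℂ H] [CompleteSpace H] (T : H →L[ℂ] H) :
    Hyponormal T ↔ ∀ x, ‖adjoint T x‖ ≤ ‖T x‖ := by
  have hsa : IsSelfAdjoint (star T * T - T * star T) :=
    (IsSelfAdjoint.star_mul_self T).sub (IsSelfAdjoint.mul_star_self T)
  have hre (x : H) : (star T * T - T * star T).reApplyInnerSelf x =
      ‖T x‖ ^ 2 - ‖adjoint T x‖ ^ 2 := by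
    rw [apply_norm_sq_eq_inner_adjoint_left T, apply_norm_sq_eq_inner_adjoint_left (adjoint T),
      adjoint_adjoint]
    simp [reApplyInnerSelf_apply, inner_sub_left, star_eq_adjoint]
  simp only [Hyponormal, isPositive_def', hsa, true_and, hre, sub_nonneg]
  exact forall_congr' fun x => sq_le_sq₀ (norm_nonneg _) (norm_nonneg _)

section Compression

variable {𝕜 H K : Type*} [RCLike 𝕜] [NormedAddCommGroup H] [InnerProductSpace 𝕜 H]
  [CompleteSpace H] [NormedAddCommGroup K] [InnerProductSpace 𝕜 K] [CompleteSpace K]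

theorem norm_adjoint_apply_le_of_intertwines {A : H →L[𝕜] H} {N : K →L[𝕜] K} {V : H →ₗᵢ[𝕜] K}
    (hNV : ∀ x, N (V x) = V (A x)) (x : H) :
    ‖adjoint A x‖ ≤ ‖adjoint N (V x)‖ := by
  set W := V.toContinuousLinearMap
  have hA : A = adjoint W ∘L N ∘L W :=
    calc A = (adjoint W ∘L W) ∘L A := by rw [V.adjoint_comp_self, one_def, id_comp]
      _ = adjoint W ∘L N ∘L W := by
        ext y
        simp only [comp_apply, W, LinearIsometry.coe_toContinuousLinearMap, hNV]
  have hA' : adjoint A = adjoint W ∘L adjoint N ∘L W := by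
    rw [hA]; simp only [adjoint_comp, adjoint_adjoint, comp_assoc]
  calc ‖adjoint A x‖ = ‖adjoint W (adjoint N (V x))‖ := by rw [hA']; rfl
    _ ≤ ‖adjoint W‖ * ‖adjoint N (V x)‖ := le_opNorm _ _
    _ ≤ 1 * ‖adjoint N (V x)‖ := by
        gcongr
        rw [LinearIsometryEquiv.norm_map]
        exact V.norm_toContinuousLinearMap_le
    _ = ‖adjoint N (V x)‖ := one_mul _

end Compression

theorem Hyponormal.of_intertwines_isStarNormal {H K : Type*} [NormedAddCommGroup H]
    [InnerProductSpace ℂ H] [CompleteSpace H] [NormedAddCommGroup K] [InnerProductSpace ℂ K]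
    [CompleteSpace K] {A : H →L[ℂ] H} {N : K →L[ℂ] K} (V : H →ₗᵢ[ℂ] K) (hN : IsStarNormal N)
    (hNV : ∀ x, N (V x) = V (A x)) : Hyponormal A := by
  refine (hyponormal_iff_norm_adjoint_apply_le A).2 fun x => ?_
  calc ‖adjoint A x‖ ≤ ‖adjoint N (V x)‖ := norm_adjoint_apply_le_of_intertwines hNV x
    _ = ‖N (V x)‖ := (isStarNormal_iff_norm_eq_adjoint.mp hN _).symm
    _ = ‖A x‖ := by rw [hNV, V.norm_map]

theorem subNNormal_pow_hyponormal
    {H K : Type*} [NormedAddCommGroup H] [InnerProductSpace ℂ H] [CompleteSpace H]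
    [NormedAddCommGroup K] [InnerProductSpace ℂ K] [CompleteSpace K]
    (n : ℕ) (T : H →L[ℂ] H) (S : K →L[ℂ] K) (V : H →ₗᵢ[ℂ] K)
    (hnormal : IsStarNormal (S ^ n)) (hext : ∀ x : H, S (V x) = V (T x)) :
    Hyponormal (T ^ n) := by
  have hsemiconj : Function.Semiconj V T S := fun x => (hext x).symm
  refine Hyponormal.of_intertwines_isStarNormal V hnormal fun x => ?_
  simpa only [FunLike.coe_pow_eq_iterate] using (hsemiconj.iterate_right n x).symm
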